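/- Let E be a real normed vector space and L : E × E → ℝ twice continuously Fréchet differentiable, and suppose 𝔽⁻L : E×E → E × E* is a bijection with Fréchet differentiable inverse. Let ξ̃ := 𝔽⁺L ∘ (𝔽⁻L)⁻¹. Then the pullback of the Liouville 1-form by ξ̃ equals θ plus the differential of L ∘ (𝔽⁻L)⁻¹: for every z ∈ E × E* and every w ∈ E × E*, θ(ξ̃(z))(Dξ̃(z)(w)) − θ(z)(w) = D(L ∘ (𝔽⁻L)⁻¹)(z)(w). -/

import Mathlib

variable {E : Type*} [NormedAddCommGroup E] [NormedSpace ℝ E]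

/-- The Fréchet derivative of `z ↦ L (z, y)` at `x`. -/
noncomputable def D1 (L : E × E → ℝ) (x y : E) : E →L[ℝ] ℝ :=
  fderiv ℝ (fun z => L (z, y)) x

/-- The Fréchet derivative of `z ↦ L (x, z)` at `y`. -/
noncomputable def D2 (L : E × E → ℝ) (x y : E) : E →L[ℝ] ℝ :=
  fderiv ℝ (fun z => L (x, z)) y

/-- The discrete Legendre transformation `𝔽⁻L(x,y) = (x, −D₁L(x,y))`. -/
noncomputable def FLegMinus (L : E × E → ℝ) : E × E → E × (E →L[ℝ] ℝ) :=
  fun p => (p.1, -(D1 L p.1 p.2))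

/-- The discrete Legendre transformation `𝔽⁺L(x,y) = (y, D₂L(x,y))`. -/
noncomputable def FLegPlus (L : E × E → ℝ) : E × E → E × (E →L[ℝ] ℝ) :=
  fun p => (p.2, D2 L p.1 p.2)

/-- The Liouville 1-form `θ(q,p)(a,b) = p(a)` on `E × E*`. -/
def liouville (z w : E × (E →L[ℝ] ℝ)) : ℝ := z.2 w.1

lemma D1_eq {L : E × E → ℝ} (hL : Differentiable ℝ L) (x y : E) :
    D1 L x y = (fderiv ℝ L (x, y)).comp ((ContinuousLinearMap.id ℝ E).prod 0) := by
  have h1 : HasFDerivAt (fun z : E => (z, y)) ((ContinuousLinearMap.id ℝ E).prod 0) x :=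
    HasFDerivAt.prodMk (hasFDerivAt_id x) (hasFDerivAt_const y x)
  exact ((hL (x, y)).hasFDerivAt.comp x h1).fderiv

lemma D2_eq {L : E × E → ℝ} (hL : Differentiable ℝ L) (x y : E) :
    D2 L x y = (fderiv ℝ L (x, y)).comp ((0 : E →L[ℝ] E).prod (ContinuousLinearMap.id ℝ E)) := by
  have h1 : HasFDerivAt (fun z : E => (x, z)) ((0 : E →L[ℝ] E).prod (ContinuousLinearMap.id ℝ E)) y :=
    HasFDerivAt.prodMk (hasFDerivAt_const x y) (hasFDerivAt_id y)
  exact ((hL (x, y)).hasFDerivAt.comp y h1).fderiv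

lemma flegplus_diff {L : E × E → ℝ} (hL : ContDiff ℝ 2 L) :
    Differentiable ℝ (FLegPlus L) := by
  have hLd : Differentiable ℝ L := hL.differentiable (by norm_num)
  have heq : FLegPlus L = fun p : E × E =>
      (p.2, (fderiv ℝ L p).comp ((0 : E →L[ℝ] E).prod (ContinuousLinearMap.id ℝ E))) := by
    funext p
    simp [FLegPlus, D2_eq hLd p.1 p.2]
  rw [heq]
  have hd : Differentiable ℝ (fderiv ℝ L) :=
    (hL.fderiv_right (m := 1) le_rfl).differentiable one_ne_zero
  exact differentiable_snd.prodMk (hd.clm_comp (differentiable_const _))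


/-- The pullback of the Liouville 1-form by the discrete Hamiltonian evolution operator
`ξ̃ = 𝔽⁺L ∘ (𝔽⁻L)⁻¹` equals `θ` plus the differential of `L ∘ (𝔽⁻L)⁻¹`. -/
theorem discreteHamiltonianEvolution_pullback_liouville
    (L : E × E → ℝ) (hL : ContDiff ℝ 2 L)
    (Finv : E × (E →L[ℝ] ℝ) → E × E)
    (hleft : Function.LeftInverse Finv (FLegMinus L))
    (hright : Function.RightInverse Finv (FLegMinus L))
    (hFinv : Differentiable ℝ Finv) :
    ∀ (z w : E × (E →L[ℝ] ℝ)),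
      liouville ((FLegPlus L ∘ Finv) z) (fderiv ℝ (FLegPlus L ∘ Finv) z w)
          - liouville z w
        = fderiv ℝ (L ∘ Finv) z w := by
  intro z w
  have hLd : Differentiable ℝ L := hL.differentiable (by norm_num)
  have hz := hright z
  have hz2 : z.2 = -(D1 L (Finv z).1 (Finv z).2) := (congrArg Prod.snd hz).symm
  set u := fderiv ℝ Finv z w with hu
  have hFz : HasFDerivAt Finv (fderiv ℝ Finv z) z := (hFinv z).hasFDerivAt
  have hfst : u.1 = w.1 := by
    have h1 : HasFDerivAt (fun v => (Finv v).1)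
        ((ContinuousLinearMap.fst ℝ E E).comp (fderiv ℝ Finv z)) z := hFz.fst
    have heq : (fun v : E × (E →L[ℝ] ℝ) => (Finv v).1) = Prod.fst := by
      funext v; exact congrArg Prod.fst (hright v)
    rw [heq] at h1
    have h2 : HasFDerivAt (Prod.fst : E × (E →L[ℝ] ℝ) → E)
        (ContinuousLinearMap.fst ℝ E (E →L[ℝ] ℝ)) z := hasFDerivAt_fst
    have h3 := h1.unique h2
    have h4 := DFunLike.congr_fun h3 w
    simpa using h4
  have hgz : HasFDerivAt (FLegPlus L ∘ Finv)
      ((fderiv ℝ (FLegPlus L) (Finv z)).comp (fderiv ℝ Finv z)) z :=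
    ((flegplus_diff hL (Finv z)).hasFDerivAt).comp z hFz
  have hsnd : (fderiv ℝ (FLegPlus L ∘ Finv) z w).1 = u.2 := by
    have h1 : HasFDerivAt (fun v => ((FLegPlus L ∘ Finv) v).1)
        ((ContinuousLinearMap.fst ℝ E (E →L[ℝ] ℝ)).comp (fderiv ℝ (FLegPlus L ∘ Finv) z)) z :=
      hgz.fderiv ▸ hgz.fst
    have heq : (fun v : E × (E →L[ℝ] ℝ) => ((FLegPlus L ∘ Finv) v).1)
        = fun v => (Finv v).2 := by
      funext v; rfl
    rw [heq] at h1
    have h2 : HasFDerivAt (fun v => (Finv v).2)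
        ((ContinuousLinearMap.snd ℝ E E).comp (fderiv ℝ Finv z)) z := hFz.snd
    have h3 := h1.unique h2
    have h4 := DFunLike.congr_fun h3 w
    simpa using h4
  have hval : ((FLegPlus L ∘ Finv) z).2 = D2 L (Finv z).1 (Finv z).2 := rfl
  have hRHS : fderiv ℝ (L ∘ Finv) z w = fderiv ℝ L (Finv z) u := by
    have := ((hLd (Finv z)).hasFDerivAt.comp z hFz).fderiv
    rw [this]; rfl
  have hsplit : fderiv ℝ L (Finv z) u
      = D1 L (Finv z).1 (Finv z).2 u.1 + D2 L (Finv z).1 (Finv z).2 u.2 := by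
    rw [D1_eq hLd, D2_eq hLd]
    simp only [ContinuousLinearMap.comp_apply, ContinuousLinearMap.prod_apply,
      ContinuousLinearMap.id_apply, ContinuousLinearMap.zero_apply]
    rw [← map_add]
    congr 1
    simp [Prod.ext_iff]
  simp only [liouville, hsnd, hval, hRHS, hsplit]
  rw [hz2]
  simp [hfst]
  ring
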